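/- arXiv:2312.01134 — 2 statements merged into one kernel-verified Lean document; each statement's English description precedes it below -/
import Mathlib

section
/- If p < p₁ < ⋯ < p_{n+2} is a chain of admissible tiles (each strictly less in the tile order), then 3^⌊(n+2)/2⌋ · ω(p_{n+2}) ⊆ ω(p), where λω denotes the anisotropic dilate of the frequency cube ω by factor λ about its center. -/
/-! Tiles in `ℝ^{d+1} = (Fin d → ℝ) × ℝ` with anisotropic (parabolic) dilations
`δ_s(x', x_{d+1}) = (2^s x', 2^{2s} x_{d+1})`. A tile is a pair of a dyadic space cube
of scale `s` and a dyadic frequency cube of scale `s`; the order is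
`(I,ω) ≤ (I',ω') ↔ I ⊆ I' ∧ ω' ⊆ ω`.  A tile is admissible if `3ω(p)` is contained in
the frequency cube of two scales coarser containing `ω(p)`, where `λω` is the
anisotropic dilate of `ω` by `λ` about its center. -/

namespace Stmt1

variable {d : ℕ}

abbrev X (d : ℕ) := (Fin d → ℝ) × ℝ

/-- anisotropic dilation `δ_s` -/
noncomputable def dil (s : ℤ) (x : X d) : X d := (fun i => (2 : ℝ) ^ s * x.1 i, (2 : ℝ) ^ (2 * s) * x.2)

/-- unit cube with corner `k` -/
def unitCube (k : (Fin d → ℤ) × ℤ) : Set (X d) :=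
  {x | (∀ i, (k.1 i : ℝ) ≤ x.1 i ∧ x.1 i < k.1 i + 1) ∧ ((k.2 : ℝ) ≤ x.2 ∧ x.2 < k.2 + 1)}

/-- dyadic frequency cube of scale `s` with index `k` -/
def freqCube (s : ℤ) (k : (Fin d → ℤ) × ℤ) : Set (X d) := dil (-s) '' unitCube k

/-- center of the frequency cube of scale `s` with index `k` -/
noncomputable def freqCenter (s : ℤ) (k : (Fin d → ℤ) × ℤ) : X d :=
  dil (-s) (fun i => (k.1 i : ℝ) + 1 / 2, (k.2 : ℝ) + 1 / 2)

/-- anisotropic dilate of a set `S` by factor `l` about the point `c`: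
`λω = c + δ_{log₂ λ} (ω - c)` -/
def dilate (l : ℝ) (c : X d) (S : Set (X d)) : Set (X d) :=
  (fun x => (fun i => c.1 i + l * (x.1 i - c.1 i), c.2 + l ^ 2 * (x.2 - c.2))) '' S

/-- A tile: a dyadic space cube and a dyadic frequency cube of the same scale. -/
structure Tile (d : ℕ) where
  s : ℤ
  kI : (Fin d → ℤ) × ℤ
  kω : (Fin d → ℤ) × ℤ

/-- spatial cube of a tile -/
def Tile.I (p : Tile d) : Set (X d) := dil p.s '' unitCube p.kI

/-- frequency cube of a tile -/
def Tile.ω (p : Tile d) : Set (X d) := freqCube p.s p.kω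

/-- center of the frequency cube of a tile -/
noncomputable def Tile.c (p : Tile d) : X d := freqCenter p.s p.kω

/-- tile order -/
def Tile.le (p q : Tile d) : Prop := p.I ⊆ q.I ∧ q.ω ⊆ p.ω

/-- admissibility: `3ω(p)` is contained in the (unique) frequency cube of scale
`s(p) - 2` containing `ω(p)` -/
def Tile.admissible (p : Tile d) : Prop :=
  ∃ k : (Fin d → ℤ) × ℤ,
    p.ω ⊆ freqCube (p.s - 2) k ∧ dilate 3 p.c p.ω ⊆ freqCube (p.s - 2) k

lemma dil_dil (a b : ℤ) (x : X d) : dil a (dil b x) = dil (a + b) x := by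
  unfold dil
  refine Prod.ext ?_ ?_
  · funext i
    show (2:ℝ)^a * ((2:ℝ)^b * x.1 i) = (2:ℝ)^(a+b) * x.1 i
    rw [← mul_assoc, ← zpow_add₀ (two_ne_zero : (2:ℝ) ≠ 0)]
  · show (2:ℝ)^(2*a) * ((2:ℝ)^(2*b) * x.2) = (2:ℝ)^(2*(a+b)) * x.2
    rw [← mul_assoc, ← zpow_add₀ (two_ne_zero : (2:ℝ) ≠ 0), mul_add]

lemma dil_zero (x : X d) : dil 0 x = x := by
  unfold dil
  refine Prod.ext ?_ ?_
  · funext i; show (2:ℝ)^(0:ℤ) * x.1 i = x.1 i; simp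
  · show (2:ℝ)^(2*(0:ℤ)) * x.2 = x.2; norm_num

lemma dil_inj (s : ℤ) : Function.Injective (dil (d := d) s) := by
  intro x y h
  have h2 := congrArg (dil (-s)) h
  rwa [dil_dil, dil_dil, neg_add_cancel, dil_zero, dil_zero] at h2

lemma mem_dil_image {s : ℤ} {k : (Fin d → ℤ) × ℤ} {x : X d} :
    x ∈ dil s '' unitCube k ↔
      (∀ i, (2:ℝ)^s * k.1 i ≤ x.1 i ∧ x.1 i < (2:ℝ)^s * (k.1 i + 1)) ∧
      ((2:ℝ)^(2*s) * k.2 ≤ x.2 ∧ x.2 < (2:ℝ)^(2*s) * (k.2 + 1)) := by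
  have h1 : (0:ℝ) < (2:ℝ)^s := by positivity
  have h2 : (0:ℝ) < (2:ℝ)^(2*s) := by positivity
  have key : ∀ y : ℝ, (2:ℝ)^(-s) * ((2:ℝ)^s * y) = y := fun y => by
    rw [← mul_assoc, ← zpow_add₀ (two_ne_zero : (2:ℝ) ≠ 0), neg_add_cancel, zpow_zero, one_mul]
  have key2 : ∀ y : ℝ, (2:ℝ)^(2*(-s)) * ((2:ℝ)^(2*s) * y) = y := fun y => by
    rw [← mul_assoc, ← zpow_add₀ (two_ne_zero : (2:ℝ) ≠ 0)]
    norm_num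
  constructor
  · rintro ⟨y, ⟨hy1, hy2⟩, rfl⟩
    refine ⟨fun i => ?_, ?_, ?_⟩
    · exact ⟨mul_le_mul_of_nonneg_left (hy1 i).1 h1.le, mul_lt_mul_of_pos_left (hy1 i).2 h1⟩
    · exact mul_le_mul_of_nonneg_left hy2.1 h2.le
    · exact mul_lt_mul_of_pos_left hy2.2 h2
  · rintro ⟨hx1, hx2⟩
    refine ⟨dil (-s) x, ⟨fun i => ?_, ?_, ?_⟩, by rw [dil_dil, add_neg_cancel, dil_zero]⟩
    · constructor
      · show (k.1 i : ℝ) ≤ (2:ℝ)^(-s) * x.1 i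
        calc (k.1 i : ℝ) = (2:ℝ)^(-s) * ((2:ℝ)^s * k.1 i) := (key _).symm
        _ ≤ _ := mul_le_mul_of_nonneg_left (hx1 i).1 (by positivity)
      · show (2:ℝ)^(-s) * x.1 i < (k.1 i : ℝ) + 1
        calc (2:ℝ)^(-s) * x.1 i < (2:ℝ)^(-s) * ((2:ℝ)^s * ((k.1 i : ℝ) + 1)) :=
              mul_lt_mul_of_pos_left (hx1 i).2 (by positivity)
        _ = _ := key _
    · show (k.2 : ℝ) ≤ (2:ℝ)^(2*(-s)) * x.2
      calc (k.2 : ℝ) = (2:ℝ)^(2*(-s)) * ((2:ℝ)^(2*s) * k.2) := (key2 _).symm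
      _ ≤ _ := mul_le_mul_of_nonneg_left hx2.1 (by positivity)
    · show (2:ℝ)^(2*(-s)) * x.2 < (k.2 : ℝ) + 1
      calc (2:ℝ)^(2*(-s)) * x.2 < (2:ℝ)^(2*(-s)) * ((2:ℝ)^(2*s) * ((k.2:ℝ)+1)) :=
            mul_lt_mul_of_pos_left hx2.2 (by positivity)
      _ = _ := key2 _

lemma mem_freqCube {s : ℤ} {k : (Fin d → ℤ) × ℤ} {x : X d} :
    x ∈ freqCube s k ↔
      (∀ i, (2:ℝ)^(-s) * k.1 i ≤ x.1 i ∧ x.1 i < (2:ℝ)^(-s) * (k.1 i + 1)) ∧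
      ((2:ℝ)^(2*(-s)) * k.2 ≤ x.2 ∧ x.2 < (2:ℝ)^(2*(-s)) * (k.2 + 1)) :=
  mem_dil_image

def Box (c : X d) (r R : ℝ) : Set (X d) :=
  {x | (∀ i, c.1 i - r ≤ x.1 i ∧ x.1 i < c.1 i + r) ∧ (c.2 - R ≤ x.2 ∧ x.2 < c.2 + R)}

lemma center_mem_box {c : X d} {r R : ℝ} (hr : 0 < r) (hR : 0 < R) : c ∈ Box c r R :=
  ⟨fun _ => ⟨by linarith, by linarith⟩, by linarith, by linarith⟩

lemma box_subset_iff {c c' : X d} {r R r' R' : ℝ} (hr : 0 < r) (hR : 0 < R) :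
    Box c r R ⊆ Box c' r' R' ↔
      (∀ i, c'.1 i - r' ≤ c.1 i - r ∧ c.1 i + r ≤ c'.1 i + r') ∧
      (c'.2 - R' ≤ c.2 - R ∧ c.2 + R ≤ c'.2 + R') := by
  constructor
  · intro h
    constructor
    · intro i
      have hsub : Set.Ico (c.1 i - r) (c.1 i + r) ⊆ Set.Ico (c'.1 i - r') (c'.1 i + r') := by
        intro t ht
        have hx : ((Function.update c.1 i t, c.2) : X d) ∈ Box c r R := by
          refine ⟨fun j => ?_, by simpa using And.intro (by linarith) (by linarith)⟩
          by_cases hj : j = i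
          · subst hj; simp only [Function.update_self]; exact ⟨ht.1, ht.2⟩
          · simp only [Function.update_of_ne hj]
            exact ⟨by linarith, by linarith⟩
        have hm := (h hx).1 i
        simpa using hm
      exact (Set.Ico_subset_Ico_iff (by linarith)).1 hsub
    · have hsub : Set.Ico (c.2 - R) (c.2 + R) ⊆ Set.Ico (c'.2 - R') (c'.2 + R') := by
        intro t ht
        have hx : ((c.1, t) : X d) ∈ Box c r R := by
          exact ⟨fun j => ⟨by linarith, by linarith⟩, ht.1, ht.2⟩
        have hm := (h hx).2
        exact hm
      exact (Set.Ico_subset_Ico_iff (by linarith)).1 hsub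
  · rintro ⟨h1, h2⟩ x ⟨hx1, hx2⟩
    refine ⟨fun i => ⟨?_, ?_⟩, ?_, ?_⟩
    · linarith [(hx1 i).1, (h1 i).1]
    · linarith [(hx1 i).2, (h1 i).2]
    · linarith [hx2.1, h2.1]
    · linarith [hx2.2, h2.2]

lemma dilate_box {l : ℝ} (hl : 0 < l) (c : X d) (r R : ℝ) :
    dilate l c (Box c r R) = Box c (l * r) (l ^ 2 * R) := by
  have hl2 : (0:ℝ) < l ^ 2 := by positivity
  ext x
  constructor
  · rintro ⟨y, ⟨hy1, hy2⟩, rfl⟩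
    refine ⟨fun i => ⟨?_, ?_⟩, ?_, ?_⟩
    · show c.1 i - l * r ≤ c.1 i + l * (y.1 i - c.1 i)
      nlinarith [(hy1 i).1]
    · show c.1 i + l * (y.1 i - c.1 i) < c.1 i + l * r
      nlinarith [(hy1 i).2]
    · show c.2 - l ^ 2 * R ≤ c.2 + l ^ 2 * (y.2 - c.2)
      nlinarith [hy2.1]
    · show c.2 + l ^ 2 * (y.2 - c.2) < c.2 + l ^ 2 * R
      nlinarith [hy2.2]
  · rintro ⟨hx1, hx2⟩
    refine ⟨(fun i => c.1 i + (x.1 i - c.1 i) / l, c.2 + (x.2 - c.2) / l ^ 2),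
      ⟨fun i => ⟨?_, ?_⟩, ?_, ?_⟩, ?_⟩
    · show c.1 i - r ≤ c.1 i + (x.1 i - c.1 i) / l
      have : -r ≤ (x.1 i - c.1 i) / l := by
        rw [le_div_iff₀ hl]; nlinarith [(hx1 i).1]
      linarith
    · show c.1 i + (x.1 i - c.1 i) / l < c.1 i + r
      have : (x.1 i - c.1 i) / l < r := by
        rw [div_lt_iff₀ hl]; nlinarith [(hx1 i).2]
      linarith
    · show c.2 - R ≤ c.2 + (x.2 - c.2) / l ^ 2
      have : -R ≤ (x.2 - c.2) / l ^ 2 := by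
        rw [le_div_iff₀ hl2]; nlinarith [hx2.1]
      linarith
    · show c.2 + (x.2 - c.2) / l ^ 2 < c.2 + R
      have : (x.2 - c.2) / l ^ 2 < R := by
        rw [div_lt_iff₀ hl2]; nlinarith [hx2.2]
      linarith
    · refine Prod.ext ?_ ?_
      · funext i
        show c.1 i + l * ((c.1 i + (x.1 i - c.1 i) / l) - c.1 i) = x.1 i
        field_simp
        ring
      · show c.2 + l ^ 2 * ((c.2 + (x.2 - c.2) / l ^ 2) - c.2) = x.2
        field_simp
        ring
lemma freqCube_eq_box (s : ℤ) (k : (Fin d → ℤ) × ℤ) :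
    freqCube s k = Box (freqCenter s k) ((2:ℝ)^(-s) / 2) ((2:ℝ)^(2*(-s)) / 2) := by
  ext x
  rw [mem_freqCube]
  show _ ↔ (∀ i, _ ∧ _) ∧ (_ ∧ _)
  have e1 : ∀ i, (freqCenter s k : X d).1 i = (2:ℝ)^(-s) * ((k.1 i : ℝ) + 1/2) := fun i => rfl
  have e2 : (freqCenter s k : X d).2 = (2:ℝ)^(2*(-s)) * ((k.2 : ℝ) + 1/2) := rfl
  constructor
  · rintro ⟨h1, h2⟩
    refine ⟨fun i => ⟨?_, ?_⟩, ?_, ?_⟩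
    · rw [e1]; nlinarith [(h1 i).1]
    · rw [e1]; nlinarith [(h1 i).2]
    · rw [e2]; nlinarith [h2.1]
    · rw [e2]; nlinarith [h2.2]
  · rintro ⟨h1, h2⟩
    rw [e2] at h2
    refine ⟨fun i => ?_, ?_, ?_⟩
    · have h := h1 i; rw [e1] at h
      exact ⟨by nlinarith [h.1], by nlinarith [h.2]⟩
    · nlinarith [h2.1]
    · nlinarith [h2.2]

lemma tile_omega_eq (p : Tile d) :
    p.ω = Box p.c ((2:ℝ)^(-p.s) / 2) ((2:ℝ)^(2*(-p.s)) / 2) :=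
  freqCube_eq_box p.s p.kω

lemma unitCube_sub {k k' : (Fin d → ℤ) × ℤ} (h : unitCube (d := d) k ⊆ unitCube k') :
    k = k' := by
  have hm : ((fun i => (k.1 i : ℝ)), (k.2 : ℝ)) ∈ unitCube (d := d) k :=
    ⟨fun i => ⟨le_refl _, by norm_num⟩, le_refl _, by norm_num⟩
  obtain ⟨h1, h2⟩ := h hm
  refine Prod.ext ?_ ?_
  · funext i
    have a : (k'.1 i : ℝ) ≤ k.1 i := (h1 i).1
    have b : (k.1 i : ℝ) < k'.1 i + 1 := (h1 i).2
    have a' : k'.1 i ≤ k.1 i := by exact_mod_cast a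
    have b' : (k.1 i) < k'.1 i + 1 := by exact_mod_cast b
    omega
  · have a : (k'.2 : ℝ) ≤ (k.2 : ℝ) := h2.1
    have b : (k.2 : ℝ) < (k'.2 : ℝ) + 1 := h2.2
    have a' : k'.2 ≤ k.2 := by exact_mod_cast a
    have b' : k.2 < k'.2 + 1 := by exact_mod_cast b
    omega

lemma dyadic1 {u v : ℝ} (hu : 0 < u) {N : ℤ} (hv : v = u * (N:ℝ)) {a b : ℤ} {x : ℝ}
    (h1 : u * a ≤ x) (h2 : x < u * ((a:ℝ) + 1)) (h3 : v * b ≤ x) (h4 : x < v * ((b:ℝ) + 1)) :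
    v * b ≤ u * a ∧ u * ((a:ℝ) + 1) ≤ v * ((b:ℝ) + 1) := by
  subst hv
  have l1 : (N:ℝ) * b < (a:ℝ) + 1 := by
    have h := lt_of_le_of_lt h3 h2
    rw [mul_assoc] at h
    exact (mul_lt_mul_iff_right₀ hu).mp h
  have l1' : N * b ≤ a := by
    have : N * b < a + 1 := by exact_mod_cast l1
    omega
  have l2 : (a:ℝ) < (N:ℝ) * ((b:ℝ) + 1) := by
    have h := lt_of_le_of_lt h1 h4
    rw [mul_assoc] at h
    exact (mul_lt_mul_iff_right₀ hu).mp h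
  have l2' : a + 1 ≤ N * (b + 1) := by
    have : a < N * (b + 1) := by exact_mod_cast l2
    omega
  constructor
  · rw [mul_assoc]
    apply mul_le_mul_of_nonneg_left _ hu.le
    exact_mod_cast l1'
  · rw [mul_assoc]
    apply mul_le_mul_of_nonneg_left _ hu.le
    exact_mod_cast l2'

lemma freqCube_subset {s t : ℤ} (hst : s ≤ t) {k k' : (Fin d → ℤ) × ℤ} {x : X d}
    (hx1 : x ∈ freqCube t k) (hx2 : x ∈ freqCube s k') : freqCube t k ⊆ freqCube s k' := by
  have hu : (0:ℝ) < (2:ℝ)^(-t) := by positivity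
  have hu2 : (0:ℝ) < (2:ℝ)^(2*(-t)) := by positivity
  have key : (2:ℝ)^(-s) = (2:ℝ)^(-t) * (((2:ℤ)^((t-s).toNat) : ℤ) : ℝ) := by
    push_cast
    rw [← zpow_natCast (2:ℝ) ((t-s).toNat), ← zpow_add₀ (two_ne_zero : (2:ℝ) ≠ 0)]
    congr 1
    rw [Int.toNat_of_nonneg (by omega)]
    omega
  have key2 : (2:ℝ)^(2*(-s)) = (2:ℝ)^(2*(-t)) * (((2:ℤ)^((2*t-2*s).toNat) : ℤ) : ℝ) := by
    push_cast
    rw [← zpow_natCast (2:ℝ) ((2*t-2*s).toNat), ← zpow_add₀ (two_ne_zero : (2:ℝ) ≠ 0)]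
    congr 1
    rw [Int.toNat_of_nonneg (by omega)]
    omega
  rw [mem_freqCube] at hx1 hx2
  intro y hy
  rw [mem_freqCube] at hy ⊢
  obtain ⟨ha1, ha2⟩ := hx1
  obtain ⟨hb1, hb2⟩ := hx2
  obtain ⟨hy1, hy2⟩ := hy
  constructor
  · intro i
    have hd := dyadic1 hu key (ha1 i).1 (ha1 i).2 (hb1 i).1 (hb1 i).2
    exact ⟨le_trans hd.1 (hy1 i).1, lt_of_lt_of_le (hy1 i).2 hd.2⟩
  · have hd := dyadic1 hu2 key2 ha2.1 ha2.2 hb2.1 hb2.2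
    exact ⟨le_trans hd.1 hy2.1, lt_of_lt_of_le hy2.2 hd.2⟩
lemma rad_pos (s : ℤ) : (0:ℝ) < (2:ℝ)^(-s) / 2 := by positivity
lemma Rad_pos (s : ℤ) : (0:ℝ) < (2:ℝ)^(2*(-s)) / 2 := by positivity

lemma le_scale_of_omega_subset {p q : Tile d} (h : q.ω ⊆ p.ω) : p.s ≤ q.s := by
  rw [tile_omega_eq, tile_omega_eq] at h
  have hh := (box_subset_iff (rad_pos q.s) (Rad_pos q.s)).mp h
  have h2 := hh.2
  have hRle : (2:ℝ)^(2*(-q.s)) ≤ (2:ℝ)^(2*(-p.s)) := by linarith [h2.1, h2.2]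
  have := (zpow_le_zpow_iff_right₀ (by norm_num : (1:ℝ) < 2)).mp hRle
  omega

lemma lt_scale {p q : Tile d} (hle : Tile.le p q) (hne : p ≠ q) : p.s < q.s := by
  obtain ⟨hI, hω⟩ := hle
  have hs := le_scale_of_omega_subset hω
  rcases lt_or_eq_of_le hs with h | he
  · exact h
  · exfalso; apply hne
    unfold Tile.ω freqCube at hω
    unfold Tile.I at hI
    rw [← he] at hω
    rw [he] at hI
    have hωk : q.kω = p.kω :=
      unitCube_sub ((Set.image_subset_image_iff (dil_inj _)).mp hω)
    have hIk : p.kI = q.kI :=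
      unitCube_sub ((Set.image_subset_image_iff (dil_inj _)).mp hI)
    cases p; cases q
    simp_all

/-- Key step: if `B` is a box contained in `ω(p₂)`, `ω(p₂) ⊆ ω(p₀)`, the scale gap is
at least 2 and `p₂` is admissible, then the tripled box is contained in `ω(p₀)`. -/
lemma step {p₀ p₂ : Tile d} (hsub : p₂.ω ⊆ p₀.ω) (hs : p₀.s + 2 ≤ p₂.s)
    (hadm : p₂.admissible) {c : X d} {r R : ℝ} (hr : 0 < r) (hR : 0 < R)
    (hB : Box c r R ⊆ p₂.ω) :
    Box c (3 * r) (9 * R) ⊆ p₀.ω := by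
  obtain ⟨k, hk1, hk2⟩ := hadm
  -- a common point of freqCube (p₂.s - 2) k and ω(p₀)
  have hx : p₂.c ∈ p₂.ω := by
    rw [tile_omega_eq]; exact center_mem_box (rad_pos _) (Rad_pos _)
  have hQ : freqCube (p₂.s - 2) k ⊆ p₀.ω := by
    have := freqCube_subset (s := p₀.s) (t := p₂.s - 2) (by omega)
      (hk1 hx) (show _ ∈ freqCube p₀.s p₀.kω from hsub hx)
    exact this
  -- Box c (3r) (9R) ⊆ dilate 3 p₂.c p₂.ω
  have h3 : dilate 3 p₂.c p₂.ω
      = Box p₂.c (3 * ((2:ℝ)^(-p₂.s)/2)) ((3:ℝ)^2 * ((2:ℝ)^(2*(-p₂.s))/2)) := by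
    rw [tile_omega_eq, dilate_box (by norm_num : (0:ℝ) < 3)]
  rw [tile_omega_eq p₂] at hB
  have hineq := (box_subset_iff hr hR).mp hB
  obtain ⟨hi1, hi2⟩ := hineq
  have hBsub : Box c (3 * r) (9 * R)
      ⊆ Box p₂.c (3 * ((2:ℝ)^(-p₂.s)/2)) ((3:ℝ)^2 * ((2:ℝ)^(2*(-p₂.s))/2)) := by
    rw [box_subset_iff (by linarith) (by linarith)]
    constructor
    · intro i
      obtain ⟨a1, a2⟩ := hi1 i
      constructor <;> nlinarith
    · obtain ⟨a1, a2⟩ := hi2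
      constructor <;> nlinarith
  intro y hy
  exact hQ (hk2 (h3 ▸ hBsub hy))
lemma chain_lemma : ∀ (m : ℕ) (q : ℕ → Tile d),
    (∀ i, i < m + 2 → Tile.le (q i) (q (i+1)) ∧ q i ≠ q (i+1)) →
    (∀ i, i ≤ m + 2 → (q i).admissible) →
    dilate ((3:ℝ) ^ ((m + 2) / 2)) (q (m+2)).c (q (m+2)).ω ⊆ (q 0).ω
  | 0, q, hc, ha => by
    obtain ⟨hle0, hne0⟩ := hc 0 (by norm_num)
    obtain ⟨hle1, hne1⟩ := hc 1 (by norm_num)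
    have hω0 : (q 1).ω ⊆ (q 0).ω := hle0.2
    have hω1 : (q 2).ω ⊆ (q 1).ω := hle1.2
    have hsub : (q 2).ω ⊆ (q 0).ω := hω1.trans hω0
    have hs : (q 0).s + 2 ≤ (q 2).s := by
      have a : (q 0).s < (q 1).s := lt_scale hle0 hne0
      have b : (q 1).s < (q 2).s := lt_scale hle1 hne1
      omega
    show dilate ((3:ℝ) ^ 1) (q 2).c (q 2).ω ⊆ (q 0).ω
    rw [tile_omega_eq (q 2), dilate_box (by norm_num : (0:ℝ) < (3:ℝ)^1)]
    rw [show ((3:ℝ)^1) * ((2:ℝ)^(-(q 2).s)/2) = 3 * ((2:ℝ)^(-(q 2).s)/2) from by ring,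
        show (((3:ℝ)^1)^2) * ((2:ℝ)^(2*(-(q 2).s))/2) = 9 * ((2:ℝ)^(2*(-(q 2).s))/2) from by ring]
    exact step hsub hs (ha 2 (by norm_num)) (rad_pos _) (Rad_pos _)
      (tile_omega_eq (q 2)).symm.subset
  | 1, q, hc, ha => by
    obtain ⟨hle0, hne0⟩ := hc 0 (by norm_num)
    obtain ⟨hle1, hne1⟩ := hc 1 (by norm_num)
    obtain ⟨hle2, hne2⟩ := hc 2 (by norm_num)
    have hω0 : (q 1).ω ⊆ (q 0).ω := hle0.2
    have hω1 : (q 2).ω ⊆ (q 1).ω := hle1.2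
    have hω2 : (q 3).ω ⊆ (q 2).ω := hle2.2
    have hsub : (q 3).ω ⊆ (q 0).ω := (hω2.trans hω1).trans hω0
    have hs : (q 0).s + 2 ≤ (q 3).s := by
      have a : (q 0).s < (q 1).s := lt_scale hle0 hne0
      have b : (q 1).s < (q 2).s := lt_scale hle1 hne1
      have c : (q 2).s < (q 3).s := lt_scale hle2 hne2
      omega
    show dilate ((3:ℝ) ^ 1) (q 3).c (q 3).ω ⊆ (q 0).ω
    rw [tile_omega_eq (q 3), dilate_box (by norm_num : (0:ℝ) < (3:ℝ)^1)]
    rw [show ((3:ℝ)^1) * ((2:ℝ)^(-(q 3).s)/2) = 3 * ((2:ℝ)^(-(q 3).s)/2) from by ring,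
        show (((3:ℝ)^1)^2) * ((2:ℝ)^(2*(-(q 3).s))/2) = 9 * ((2:ℝ)^(2*(-(q 3).s))/2) from by ring]
    exact step hsub hs (ha 3 (by norm_num)) (rad_pos _) (Rad_pos _)
      (tile_omega_eq (q 3)).symm.subset
  | (m+2), q, hc, ha => by
    have hIH := chain_lemma m (fun i => q (i+2))
      (fun i hi => hc (i+2) (by omega)) (fun i hi => ha (i+2) (by omega))
    -- hIH : dilate (3^((m+2)/2)) (q (m+2+2)).c (q (m+2+2)).ω ⊆ (q 2).ω
    obtain ⟨hle0, hne0⟩ := hc 0 (by omega)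
    obtain ⟨hle1, hne1⟩ := hc 1 (by omega)
    have hω0 : (q 1).ω ⊆ (q 0).ω := hle0.2
    have hω1 : (q 2).ω ⊆ (q 1).ω := hle1.2
    have hsub : (q 2).ω ⊆ (q 0).ω := hω1.trans hω0
    have hs : (q 0).s + 2 ≤ (q 2).s := by
      have a : (q 0).s < (q 1).s := lt_scale hle0 hne0
      have b : (q 1).s < (q 2).s := lt_scale hle1 hne1
      omega
    have he : (m + 2 + 2) / 2 = (m + 2) / 2 + 1 := by omega
    rw [he, tile_omega_eq (q (m+2+2)),
      dilate_box (by positivity : (0:ℝ) < (3:ℝ)^((m+2)/2 + 1))]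
    rw [show ((3:ℝ)^((m+2)/2 + 1)) * ((2:ℝ)^(-(q (m+2+2)).s)/2)
          = 3 * ((3:ℝ)^((m+2)/2) * ((2:ℝ)^(-(q (m+2+2)).s)/2)) from by ring,
        show (((3:ℝ)^((m+2)/2 + 1))^2) * ((2:ℝ)^(2*(-(q (m+2+2)).s))/2)
          = 9 * (((3:ℝ)^((m+2)/2))^2 * ((2:ℝ)^(2*(-(q (m+2+2)).s))/2)) from by ring]
    apply step hsub hs (ha 2 (by omega)) (by positivity) (by positivity)
    rw [tile_omega_eq (q (m+2+2)), dilate_box (by positivity : (0:ℝ) < (3:ℝ)^((m+2)/2))] at hIH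
    exact hIH


/-- If `p = p_0 < p_1 < ⋯ < p_{n+2}` is a chain of admissible tiles, then
`3^{⌊(n+2)/2⌋} ω(p_{n+2}) ⊆ ω(p)`. -/
theorem stmt_1 (n : ℕ) (p : Fin (n + 3) → Tile d)
    (hchain : ∀ i : Fin (n + 2),
      Tile.le (p i.castSucc) (p i.succ) ∧ p i.castSucc ≠ p i.succ)
    (hadm : ∀ i, (p i).admissible) :
    dilate ((3 : ℝ) ^ ((n + 2) / 2)) (p (Fin.last (n + 2))).c (p (Fin.last (n + 2))).ω
      ⊆ (p 0).ω := by
  have key := chain_lemma n (fun i => p ⟨min i (n+2), by omega⟩)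
    (fun i hi => by
      have g1 : p (⟨min i (n+2), by omega⟩ : Fin (n+3)) = p (Fin.castSucc ⟨i, hi⟩) :=
        congrArg p (Fin.ext (show min i (n+2) = i by omega))
      have g2 : p (⟨min (i+1) (n+2), by omega⟩ : Fin (n+3)) = p (Fin.succ ⟨i, hi⟩) :=
        congrArg p (Fin.ext (show min (i+1) (n+2) = i+1 by omega))
      rw [g1, g2]
      exact hchain ⟨i, hi⟩)
    (fun i _ => hadm _)
  have e1 : p (⟨min (n+2) (n+2), by omega⟩ : Fin (n+3)) = p (Fin.last (n+2)) :=
    congrArg p (Fin.ext (show min (n+2) (n+2) = n+2 by omega))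
  have e2 : p (⟨min 0 (n+2), by omega⟩ : Fin (n+3)) = p 0 :=
    congrArg p (Fin.ext (show min 0 (n+2) = 0 by omega))
  rw [e1, e2] at key
  exact key

end Stmt1
end

section
/- Let μ_0 be the measure on ℝ^{d+1} defined by ∫ f dμ_0 = ∫_{1/8 < |y| < 1/3} f(y, |y|²) K_0(y) dy with K_0 smooth, supported in {1/8 < |y| < 1/3}, and satisfying |∂^α K_0| ≤ C for |α| ≤ m with m > d/2. Then there is a constant C' with |μ̂_0(ξ)|² ≤ C' min{1, |ξ_{d+1}|^{-d}} for all ξ ∈ ℝ^{d+1}. -/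
open MeasureTheory Filter Complex Real FourierTransform
open scoped RealInnerProductSpace Topology

/-- A smooth compactly supported function is a Schwartz function. -/
noncomputable def toSchwartz {V : Type*} [NormedAddCommGroup V] [NormedSpace ℝ V]
    (K : V → ℂ) (hK : ContDiff ℝ (⊤ : ℕ∞) K) (hcs : HasCompactSupport K) : SchwartzMap V ℂ where
  toFun := K
  smooth' := hK.of_le (by simp)
  decay' := by
    intro k n
    obtain ⟨C, hC⟩ := (hK.continuous_iteratedFDeriv (by exact_mod_cast le_top)).bounded_above_of_compact_support
      (hcs.iteratedFDeriv (𝕜 := ℝ) n)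
    obtain ⟨R, hR⟩ := (hcs.iteratedFDeriv (𝕜 := ℝ) n).isBounded.subset_closedBall 0
    refine ⟨(max R 1) ^ k * max C 0, fun x => ?_⟩
    by_cases hx : x ∈ tsupport (iteratedFDeriv ℝ n K)
    · have h1 : ‖x‖ ≤ max R 1 := le_trans (by simpa using hR hx) (le_max_left _ _)
      have h2 : ‖iteratedFDeriv ℝ n K x‖ ≤ max C 0 := le_trans (hC x) (le_max_left _ _)
      exact mul_le_mul (pow_le_pow_left₀ (norm_nonneg _) h1 k) h2 (norm_nonneg _) (by positivity)
    · rw [image_eq_zero_of_notMem_tsupport hx]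
      simp only [norm_zero, mul_zero]
      positivity

@[simp] lemma norm_exp_I_mul_ofReal (r : ℝ) : ‖Complex.exp (Complex.I * (r : ℂ))‖ = 1 := by
  rw [mul_comm]
  simp [Complex.norm_exp]

lemma phase_combine {V : Type*} [NormedAddCommGroup V] [InnerProductSpace ℝ V]
    (ε ξd : ℝ) (ξ' x₀ : V) (hx₀ : ∀ y : V, 2 * Real.pi * ⟪x₀, y⟫ = ⟪ξ', y⟫) (y : V) :
    Complex.exp (-((ε : ℂ) - Complex.I * (ξd : ℂ)) * (‖y‖ : ℂ) ^ 2
        + 2 * (Real.pi : ℂ) * Complex.I * ((⟪x₀, y⟫ : ℝ) : ℂ))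
      = Complex.exp (-(ε : ℂ) * (‖y‖ : ℂ) ^ 2)
        * Complex.exp (Complex.I * (((⟪ξ', y⟫ : ℝ) + ξd * ‖y‖ ^ 2 : ℝ) : ℂ)) := by
  rw [← Complex.exp_add]
  congr 1
  have h1 : ((2 * Real.pi * (⟪x₀, y⟫ : ℝ) : ℝ) : ℂ) = ((⟪ξ', y⟫ : ℝ) : ℂ) := by
    exact_mod_cast congrArg Complex.ofReal (hx₀ y)
  push_cast at h1 ⊢
  linear_combination Complex.I * h1

lemma gauss_fourier_norm_bound (d : ℕ) (ξd ε : ℝ) (hξd : ξd ≠ 0) (hε : 0 < ε)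
    (x₀ w : EuclideanSpace ℝ (Fin d)) :
    ‖𝓕 (fun y : EuclideanSpace ℝ (Fin d) => Complex.exp
        (-((ε : ℂ) - Complex.I * (ξd : ℂ)) * (‖y‖ : ℂ) ^ 2
          + 2 * (Real.pi : ℂ) * Complex.I * ((⟪x₀, y⟫ : ℝ) : ℂ))) w‖
      ≤ (Real.pi / |ξd|) ^ ((d : ℝ) / 2) := by
  have habs : 0 < |ξd| := abs_pos.mpr hξd
  set b : ℂ := (ε : ℂ) - Complex.I * (ξd : ℂ) with hb
  have hbre : 0 < b.re := by simp [hb, Complex.sub_re, Complex.mul_re, hε]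
  have hb0 : b ≠ 0 := by
    intro hcon; rw [hcon] at hbre; simp at hbre
  have hbabs : |ξd| ≤ ‖b‖ := by
    have h := Complex.abs_im_le_norm b
    have him : b.im = -ξd := by simp [hb, Complex.sub_im, Complex.mul_im]
    rwa [him, abs_neg] at h
  have hFg : 𝓕 (fun y : EuclideanSpace ℝ (Fin d) => Complex.exp
        (-b * (‖y‖ : ℂ) ^ 2 + 2 * (Real.pi : ℂ) * Complex.I * ((⟪x₀, y⟫ : ℝ) : ℂ))) w
      = ((Real.pi : ℂ) / b) ^ ((d : ℂ) / 2)
        * Complex.exp (-(Real.pi : ℂ) ^ 2 * ((‖x₀ - w‖ : ℝ) : ℂ) ^ 2 / b) := by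
    have h := fourier_gaussian_innerProductSpace' hbre x₀ w
    rw [finrank_euclideanSpace_fin] at h
    convert h using 3 <;> push_cast <;> ring_nf
  rw [hFg, norm_mul]
  have h1 : ‖((Real.pi : ℂ) / b) ^ ((d : ℂ) / 2)‖
      = (Real.pi / ‖b‖) ^ ((d : ℝ) / 2) := by
    rw [Complex.norm_cpow_of_ne_zero
      (div_ne_zero (by exact_mod_cast Real.pi_ne_zero) hb0)]
    simp [norm_div, abs_of_pos Real.pi_pos]
  have h2 : ‖Complex.exp (-(Real.pi : ℂ) ^ 2 * ((‖x₀ - w‖ : ℝ) : ℂ) ^ 2 / b)‖ ≤ 1 := by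
    rw [Complex.norm_exp, Real.exp_le_one_iff]
    have hz : (-(Real.pi : ℂ) ^ 2 * ((‖x₀ - w‖ : ℝ) : ℂ) ^ 2)
        = ((-(Real.pi ^ 2 * ‖x₀ - w‖ ^ 2) : ℝ) : ℂ) := by push_cast; ring
    rw [div_eq_mul_inv, hz, Complex.re_ofReal_mul]
    have hinvre : 0 ≤ (b⁻¹).re := by
      rw [Complex.inv_re]
      exact div_nonneg hbre.le (Complex.normSq_nonneg _)
    exact mul_nonpos_of_nonpos_of_nonneg (neg_nonpos.mpr (by positivity)) hinvre
  calc ‖((Real.pi : ℂ) / b) ^ ((d : ℂ) / 2)‖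
        * ‖Complex.exp (-(Real.pi : ℂ) ^ 2 * ((‖x₀ - w‖ : ℝ) : ℂ) ^ 2 / b)‖
      ≤ (Real.pi / ‖b‖) ^ ((d : ℝ) / 2) * 1 := by
        rw [h1]
        exact mul_le_mul_of_nonneg_left h2 (Real.rpow_nonneg
          (div_nonneg Real.pi_pos.le (norm_nonneg _)) _)
    _ ≤ (Real.pi / |ξd|) ^ ((d : ℝ) / 2) := by
        rw [mul_one]
        apply Real.rpow_le_rpow (div_nonneg Real.pi_pos.le (norm_nonneg _))
        · exact div_le_div_of_nonneg_left Real.pi_pos.le habs hbabs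
        · positivity

lemma mult_formula (d : ℕ) (K₀ h g : EuclideanSpace ℝ (Fin d) → ℂ)
    (hhint : Integrable h) (hgint : Integrable g) (hinv : 𝓕 h = K₀) :
    (∫ y, g y * K₀ y) = ∫ w, h w * 𝓕 g w := by
  have hflip : (innerₗ (EuclideanSpace ℝ (Fin d))).flip
      = innerₗ (EuclideanSpace ℝ (Fin d)) := by
    apply LinearMap.ext; intro x; apply LinearMap.ext; intro y
    exact real_inner_comm x y
  have hmf := VectorFourier.integral_fourierIntegral_smul_eq_flip
    (L := innerₗ (EuclideanSpace ℝ (Fin d))) Real.continuous_fourierChar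
    (by exact continuous_inner) hhint hgint
  rw [hflip] at hmf
  have hl : (fun ξ => VectorFourier.fourierIntegral Real.fourierChar volume
      (innerₗ (EuclideanSpace ℝ (Fin d))) h ξ • g ξ) = fun ξ => K₀ ξ • g ξ := by
    funext ξ
    congr 1
    have : VectorFourier.fourierIntegral Real.fourierChar volume
        (innerₗ (EuclideanSpace ℝ (Fin d))) h ξ = 𝓕 h ξ := rfl
    rw [this, hinv]
  rw [hl] at hmf
  calc (∫ y, g y * K₀ y) = ∫ ξ, K₀ ξ • g ξ := by
        simp only [smul_eq_mul]; congr 1; funext ξ; ring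
    _ = ∫ x, h x • VectorFourier.fourierIntegral Real.fourierChar volume
          (innerₗ (EuclideanSpace ℝ (Fin d))) g x := hmf
    _ = ∫ w, h w * 𝓕 g w := rfl

lemma key_bound (d : ℕ) (K₀ h : EuclideanSpace ℝ (Fin d) → ℂ)
    (hKc : Continuous K₀) (hKint : Integrable K₀) (hhint : Integrable h)
    (hinv : 𝓕 h = K₀) (ξ' : EuclideanSpace ℝ (Fin d)) (ξd : ℝ) (hξd : ξd ≠ 0) :
    ‖∫ y, Complex.exp (Complex.I * (((⟪ξ', y⟫ : ℝ) + ξd * ‖y‖ ^ 2 : ℝ) : ℂ)) * K₀ y‖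
      ≤ (Real.pi / |ξd|) ^ ((d : ℝ) / 2) * ∫ w, ‖h w‖ := by
  set M : ℝ := (Real.pi / |ξd|) ^ ((d : ℝ) / 2) with hM
  set B2 : ℝ := ∫ w, ‖h w‖ with hB2
  set x₀ : EuclideanSpace ℝ (Fin d) := (2 * Real.pi)⁻¹ • ξ' with hx₀def
  have hx₀ : ∀ y : EuclideanSpace ℝ (Fin d), 2 * Real.pi * ⟪x₀, y⟫ = ⟪ξ', y⟫ := by
    intro y
    rw [hx₀def, real_inner_smul_left]
    have h2π : (2 * Real.pi) ≠ 0 := by positivity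
    field_simp
  -- the regularized family
  have main : ∀ ε : ℝ, 0 < ε →
      ‖∫ y, Complex.exp (-(ε : ℂ) * (‖y‖ : ℂ) ^ 2)
          * Complex.exp (Complex.I * (((⟪ξ', y⟫ : ℝ) + ξd * ‖y‖ ^ 2 : ℝ) : ℂ)) * K₀ y‖
        ≤ M * B2 := by
    intro ε hε
    have hbre : 0 < ((ε : ℂ) - Complex.I * (ξd : ℂ)).re := by
      simp [Complex.sub_re, Complex.mul_re, hε]
    have hgint : Integrable (fun y : EuclideanSpace ℝ (Fin d) => Complex.exp
        (-((ε : ℂ) - Complex.I * (ξd : ℂ)) * (‖y‖ : ℂ) ^ 2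
          + 2 * (Real.pi : ℂ) * Complex.I * ((⟪x₀, y⟫ : ℝ) : ℂ))) := by
      simpa using GaussianFourier.integrable_cexp_neg_mul_sq_norm_add hbre
        (2 * (Real.pi : ℂ) * Complex.I) x₀
    have heq : (∫ y, Complex.exp (-(ε : ℂ) * (‖y‖ : ℂ) ^ 2)
          * Complex.exp (Complex.I * (((⟪ξ', y⟫ : ℝ) + ξd * ‖y‖ ^ 2 : ℝ) : ℂ)) * K₀ y)
        = ∫ y, (fun y : EuclideanSpace ℝ (Fin d) => Complex.exp
            (-((ε : ℂ) - Complex.I * (ξd : ℂ)) * (‖y‖ : ℂ) ^ 2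
              + 2 * (Real.pi : ℂ) * Complex.I * ((⟪x₀, y⟫ : ℝ) : ℂ))) y * K₀ y := by
      congr 1
      funext y
      rw [← phase_combine ε ξd ξ' x₀ hx₀ y]
    rw [heq, mult_formula d K₀ h _ hhint hgint hinv]
    calc ‖∫ w, h w * 𝓕 (fun y : EuclideanSpace ℝ (Fin d) => Complex.exp
            (-((ε : ℂ) - Complex.I * (ξd : ℂ)) * (‖y‖ : ℂ) ^ 2
              + 2 * (Real.pi : ℂ) * Complex.I * ((⟪x₀, y⟫ : ℝ) : ℂ))) w‖
        ≤ ∫ w, ‖h w‖ * M := by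
          apply norm_integral_le_of_norm_le (hhint.norm.mul_const M)
          refine Filter.Eventually.of_forall fun w => ?_
          rw [norm_mul]
          exact mul_le_mul_of_nonneg_left
            (gauss_fourier_norm_bound d ξd ε hξd hε x₀ w) (norm_nonneg _)
      _ = M * B2 := by rw [integral_mul_const, hB2, mul_comm]
  -- limit
  have hlim : Filter.Tendsto (fun n : ℕ => ∫ y,
      Complex.exp (-((1 / (n + 1) : ℝ) : ℂ) * (‖y‖ : ℂ) ^ 2)
        * Complex.exp (Complex.I * (((⟪ξ', y⟫ : ℝ) + ξd * ‖y‖ ^ 2 : ℝ) : ℂ)) * K₀ y)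
      Filter.atTop
      (𝓝 (∫ y, Complex.exp (Complex.I * (((⟪ξ', y⟫ : ℝ) + ξd * ‖y‖ ^ 2 : ℝ) : ℂ)) * K₀ y)) := by
    apply tendsto_integral_of_dominated_convergence (fun y => ‖K₀ y‖)
    · intro n
      apply Continuous.aestronglyMeasurable
      apply Continuous.mul _ hKc
      apply Continuous.mul
      · exact Complex.continuous_exp.comp
          (continuous_const.mul ((Complex.continuous_ofReal.comp continuous_norm).pow 2))
      · exact Complex.continuous_exp.comp (continuous_const.mul
          (Complex.continuous_ofReal.comp
            ((continuous_const.inner continuous_id).add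
              (continuous_const.mul (continuous_norm.pow 2)))))
    · exact hKint.norm
    · intro n
      refine Filter.Eventually.of_forall fun y => ?_
      rw [norm_mul, norm_mul, _root_.norm_exp_I_mul_ofReal, mul_one]
      have hε : (0:ℝ) < 1 / (n + 1) := by positivity
      have hone : ‖Complex.exp (-((1 / (n + 1) : ℝ) : ℂ) * (‖y‖ : ℂ) ^ 2)‖ ≤ 1 := by
        have hzz : -((1 / (n + 1) : ℝ) : ℂ) * (‖y‖ : ℂ) ^ 2
            = ((-((1 / (n + 1) : ℝ)) * ‖y‖ ^ 2 : ℝ) : ℂ) := by push_cast; ring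
        rw [hzz, Complex.norm_exp, Complex.ofReal_re,
          Real.exp_le_one_iff]
        nlinarith [sq_nonneg ‖y‖]
      calc ‖Complex.exp (-((1 / (n + 1) : ℝ) : ℂ) * (‖y‖ : ℂ) ^ 2)‖ * ‖K₀ y‖
          ≤ 1 * ‖K₀ y‖ := mul_le_mul_of_nonneg_right hone (norm_nonneg _)
        _ = ‖K₀ y‖ := one_mul _
    · refine Filter.Eventually.of_forall fun y => ?_
      have heq : (fun n : ℕ => Complex.exp (-((1 / (n + 1) : ℝ) : ℂ) * (‖y‖ : ℂ) ^ 2)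
            * Complex.exp (Complex.I * (((⟪ξ', y⟫ : ℝ) + ξd * ‖y‖ ^ 2 : ℝ) : ℂ)) * K₀ y)
          = (fun ε : ℝ => Complex.exp (-(ε : ℂ) * (‖y‖ : ℂ) ^ 2)
              * (Complex.exp (Complex.I * (((⟪ξ', y⟫ : ℝ) + ξd * ‖y‖ ^ 2 : ℝ) : ℂ)) * K₀ y))
            ∘ (fun n : ℕ => (1 / (n + 1) : ℝ)) := by
        funext n
        simp only [Function.comp_apply, mul_assoc]
      rw [heq]
      have hc : Continuous (fun ε : ℝ => Complex.exp (-(ε : ℂ) * (‖y‖ : ℂ) ^ 2)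
          * (Complex.exp (Complex.I * (((⟪ξ', y⟫ : ℝ) + ξd * ‖y‖ ^ 2 : ℝ) : ℂ)) * K₀ y)) := by
        apply Continuous.mul _ continuous_const
        exact Complex.continuous_exp.comp
          ((Complex.continuous_ofReal.neg).mul continuous_const)
      have h1 : Filter.Tendsto (fun n : ℕ => (1 / (n + 1) : ℝ)) Filter.atTop (𝓝 0) :=
        tendsto_one_div_add_atTop_nhds_zero_nat
      have h2 := (hc.tendsto 0).comp h1
      simpa [mul_assoc] using h2
  exact le_of_tendsto hlim.norm
    (Filter.Eventually.of_forall fun n => main _ (by positivity))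


open MeasureTheory in
/-- Stationary phase bound: with `μ̂₀(ξ) = ∫ e^{i(ξ'·y + ξ_{d+1}|y|²)} K₀(y) dy`, where
`K₀` is smooth, supported in `{1/8 < |y| < 1/3}`, with `‖∂^α K₀‖ ≤ A` for `|α| ≤ m` and
`m > d/2`, there is `C'` with `|μ̂₀(ξ)|² ≤ C' min{1, |ξ_{d+1}|^{-d}}`, stated as the
pair of inequalities `|μ̂₀(ξ)|² ≤ C'` and `|μ̂₀(ξ)|² · |ξ_{d+1}|^d ≤ C'`. -/
theorem stmt_9 (d m : ℕ) (hd : 1 ≤ d) (hm : (d : ℝ) / 2 < m) (A : ℝ)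
    (K₀ : EuclideanSpace ℝ (Fin d) → ℂ) (hK : ContDiff ℝ (⊤ : ℕ∞) K₀)
    (hsupp : Function.support K₀ ⊆ {y | 1 / 8 < ‖y‖ ∧ ‖y‖ < 1 / 3})
    (hbound : ∀ i ≤ m, ∀ y, ‖iteratedFDeriv ℝ i K₀ y‖ ≤ A) :
    ∃ C > 0, ∀ (ξ' : EuclideanSpace ℝ (Fin d)) (ξd : ℝ),
      ‖∫ y, Complex.exp (Complex.I * (((inner ℝ ξ' y : ℝ) + ξd * ‖y‖ ^ 2 : ℝ) : ℂ)) * K₀ y‖ ^ 2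
          ≤ C ∧
      ‖∫ y, Complex.exp (Complex.I * (((inner ℝ ξ' y : ℝ) + ξd * ‖y‖ ^ 2 : ℝ) : ℂ)) * K₀ y‖ ^ 2
          * |ξd| ^ (d : ℝ) ≤ C := by
  -- compact support
  have hcs : HasCompactSupport K₀ := by
    apply HasCompactSupport.of_support_subset_isCompact
      (isCompact_closedBall (0 : EuclideanSpace ℝ (Fin d)) (1/3))
    intro y hy
    exact Metric.mem_closedBall.2 (by simpa using (hsupp hy).2.le)
  have hKc : Continuous K₀ := hK.continuous
  have hKint : Integrable K₀ := hKc.integrable_of_hasCompactSupport hcs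
  have hFint : Integrable (𝓕 K₀) := by
    simpa [SchwartzMap.fourierTransformCLM_apply, SchwartzMap.fourier_coe,
      show ⇑(toSchwartz K₀ hK hcs) = K₀ from rfl] using
      (SchwartzMap.fourierTransformCLM ℂ (toSchwartz K₀ hK hcs)).integrable (μ := volume)
  set h : EuclideanSpace ℝ (Fin d) → ℂ := 𝓕⁻ K₀ with hh
  have hinv : 𝓕 h = K₀ := hKc.fourier_fourierInv_eq hKint hFint
  have hhint : Integrable h := by
    have : h = fun w => 𝓕 K₀ (-w) := funext (Real.fourierInv_eq_fourier_neg K₀)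
    rw [this]
    exact hFint.comp_neg
  set B1 := ∫ y, ‖K₀ y‖ with hB1
  set B2 := ∫ w, ‖h w‖ with hB2
  have hB1n : 0 ≤ B1 := integral_nonneg fun _ => norm_nonneg _
  have hB2n : 0 ≤ B2 := integral_nonneg fun _ => norm_nonneg _
  refine ⟨B1 ^ 2 + Real.pi ^ (d : ℝ) * B2 ^ 2 + 1, by positivity, fun ξ' ξd => ?_⟩
  set I0 := ∫ y, Complex.exp (Complex.I * (((inner ℝ ξ' y : ℝ) + ξd * ‖y‖ ^ 2 : ℝ) : ℂ)) * K₀ y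
    with hI0
  have htriv : ‖I0‖ ≤ B1 := by
    refine le_trans (norm_integral_le_integral_norm _) (le_of_eq ?_)
    congr 1 with y
    rw [norm_mul, _root_.norm_exp_I_mul_ofReal, one_mul]
  have hpos : 0 ≤ Real.pi ^ (d : ℝ) * B2 ^ 2 := by positivity
  have hfirst : ‖I0‖ ^ 2 ≤ B1 ^ 2 := pow_le_pow_left₀ (norm_nonneg _) htriv 2
  refine ⟨by linarith, ?_⟩
  rcases eq_or_ne ξd 0 with h0 | h0
  · rw [h0, abs_zero, Real.zero_rpow (Nat.cast_ne_zero.mpr (by omega)), mul_zero]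
    positivity
  · have habs : 0 < |ξd| := abs_pos.mpr h0
    have hkey : ‖I0‖ ≤ (Real.pi / |ξd|) ^ ((d : ℝ) / 2) * B2 :=
      key_bound d K₀ h hKc hKint hhint hinv ξ' ξd h0
    set M : ℝ := (Real.pi / |ξd|) ^ ((d : ℝ) / 2) with hM
    have hMn : 0 ≤ M := Real.rpow_nonneg (by positivity) _
    have hsq : ‖I0‖ ^ 2 ≤ M ^ 2 * B2 ^ 2 := by nlinarith [norm_nonneg I0]
    have hM2 : M ^ 2 * |ξd| ^ (d : ℝ) = Real.pi ^ (d : ℝ) := by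
      rw [hM, ← Real.rpow_natCast ((Real.pi / |ξd|) ^ ((d : ℝ) / 2)) 2,
        ← Real.rpow_mul (by positivity)]
      have hexp : (d : ℝ) / 2 * ((2 : ℕ) : ℝ) = (d : ℝ) := by push_cast; ring
      rw [hexp, Real.div_rpow Real.pi_pos.le (abs_nonneg _),
        div_mul_cancel₀ _ (Real.rpow_pos_of_pos habs _).ne']
    have h5 : ‖I0‖ ^ 2 * |ξd| ^ (d : ℝ) ≤ M ^ 2 * B2 ^ 2 * |ξd| ^ (d : ℝ) :=
      mul_le_mul_of_nonneg_right hsq (Real.rpow_nonneg (abs_nonneg _) _)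
    have h6 : M ^ 2 * B2 ^ 2 * |ξd| ^ (d : ℝ) = Real.pi ^ (d : ℝ) * B2 ^ 2 := by
      rw [mul_right_comm, hM2]
    rw [h6] at h5
    nlinarith [sq_nonneg B1]
end
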